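/- Let (V, ω) be a symplectic vector space of dimension 2n, L: Λ^k V* → Λ^{k+2} V* the map η ↦ ω ∧ η, Λ its adjoint with respect to a compatible inner product, and H the operator acting on Λ^k V* by multiplication by (n−k). Then [Λ, L] = H, [H, Λ] = 2Λ, and [H, L] = −2L, i.e. (L, Λ, H) form an sl(2)-triple acting on the exterior algebra of V*. -/

import Mathlib

/-!
Work in a Darboux basis `eᵢ = b (i, 0)`, `fᵢ = b (i, 1)` with dual coordinates `eᵢ*, fᵢ*`, so that
`ω = Σ eᵢ ∧ fᵢ` and `Λ = Σ ι_{fᵢ*} ι_{eᵢ*}`. Since each contraction is an odd derivation, the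
pair operator `ι_{fᵢ*} ι_{eᵢ*}` commutes with `eⱼ ∧ fⱼ ∧ ·` for `j ≠ i`, while for `j = i` their
commutator is `1 - eᵢ ∧ ι_{eᵢ*} - fᵢ ∧ ι_{fᵢ*}`. Summing over the pairs gives `[Λ, L] = n - N`
with the number operator `N = Σₘ bₘ ∧ ι_{bₘ*}`, which multiplies `k`-forms by `k` because
`Σₘ bₘ*(v) bₘ = v`. The relations with `H` only express that `L` raises the degree by two and
`Λ` lowers it by two, killing forms of degree `0` and `1`.
-/

open ExteriorAlgebra CliffordAlgebra

variable {R M : Type*} [CommRing R] [AddCommGroup M] [Module R M]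

theorem Module.Basis.coord_reindex {ι ι' : Type*} (b : Module.Basis ι R M) (e : ι ≃ ι') (i : ι') :
    (b.reindex e).coord i = b.coord (e.symm i) := by
  ext x
  simp [Module.Basis.coord_apply]

namespace ExteriorAlgebra

theorem ι_mem_exteriorPower_one (v : M) : ι R v ∈ ⋀[R]^1 M := by
  simpa only [pow_one] using LinearMap.mem_range_self _ v

theorem contractLeft_eq_zero_of_mem_exteriorPower_zero (d : Module.Dual R M)
    {x : ExteriorAlgebra R M} (hx : x ∈ ⋀[R]^0 M) : contractLeft d x = 0 := by
  rw [exteriorPower, pow_zero, Submodule.mem_one] at hx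
  obtain ⟨r, rfl⟩ := hx
  exact contractLeft_algebraMap _ _ _

theorem contractLeft_mem_exteriorPower (d : Module.Dual R M) {k : ℕ}
    {x : ExteriorAlgebra R M} (hx : x ∈ ⋀[R]^(k + 1) M) : contractLeft d x ∈ ⋀[R]^k M := by
  induction k generalizing x with
  | zero =>
    rw [zero_add, exteriorPower, pow_one] at hx
    obtain ⟨v, rfl⟩ := hx
    rw [contractLeft_ι]
    exact SetLike.algebraMap_mem_graded _ _
  | succ k ih =>
    rw [exteriorPower, pow_succ'] at hx
    induction hx using Submodule.mul_induction_on' with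
    | mem_mul_mem a ha y hy =>
      obtain ⟨v, rfl⟩ := ha
      rw [contractLeft_ι_mul]
      exact sub_mem (Submodule.smul_mem _ _ hy)
        (add_comm k 1 ▸ SetLike.mul_mem_graded (ι_mem_exteriorPower_one v) (ih hy))
    | add x _ y _ hx hy => rw [map_add]; exact add_mem hx hy

theorem sum_ι_mul_contractLeft_coord {κ : Type*} [Fintype κ] (b : Module.Basis κ R M) {k : ℕ}
    {x : ExteriorAlgebra R M} (hx : x ∈ ⋀[R]^k M) :
    ∑ m, ι R (b m) * contractLeft (b.coord m) x = (k : R) • x := by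
  induction hx using Submodule.pow_induction_on_left' with
  | algebraMap r => simp [contractLeft_algebraMap]
  | add x y i _ _ hx hy => simp only [map_add, mul_add, Finset.sum_add_distrib, hx, hy, smul_add]
  | mem_mul a ha i x _ ih =>
    obtain ⟨v, rfl⟩ := ha
    have hv : ∑ m, b.coord m v • ι R (b m) = ι R v := by
      simp_rw [Module.Basis.coord_apply, ← map_smul, ← map_sum, b.sum_repr]
    have hanti : ∀ m, ι R (b m) * ι R v = -(ι R v * ι R (b m)) := fun m =>
      eq_neg_of_add_eq_zero_left (ι_add_mul_swap _ _)
    calc ∑ m, ι R (b m) * contractLeft (b.coord m) (ι R v * x)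
        = (∑ m, b.coord m v • ι R (b m)) * x
            + ι R v * ∑ m, ι R (b m) * contractLeft (b.coord m) x := by
          simp only [contractLeft_ι_mul, mul_sub, ← mul_assoc, hanti, Finset.sum_mul,
            Finset.mul_sum, neg_mul, sub_neg_eq_add, Finset.sum_add_distrib, smul_mul_assoc,
            mul_smul_comm]
      _ = ((i + 1 : ℕ) : R) • (ι R v * x) := by
          rw [hv, ih, mul_smul_comm]
          push_cast
          module

theorem contractLeft_contractLeft_ι_mul_ι_mul (c d : Module.Dual R M) (u w : M)
    (x : ExteriorAlgebra R M) :
    contractLeft d (contractLeft c (ι R u * ι R w * x)) =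
      (c u * d w - c w * d u) • x
      - c u • (ι R w * contractLeft d x) + c w • (ι R u * contractLeft d x)
      + d u • (ι R w * contractLeft c x) - d w • (ι R u * contractLeft c x)
      + ι R u * ι R w * contractLeft d (contractLeft c x) := by
  simp only [mul_assoc, contractLeft_ι_mul, map_sub, map_smul, mul_sub, smul_sub,
    mul_smul_comm]
  module

noncomputable section

variable {κ : Type*} (b : Module.Basis (κ × Fin 2) R M)

def darbouxForm [Fintype κ] : ExteriorAlgebra R M :=
  ∑ i, ι R (b (i, 0)) * ι R (b (i, 1))

def darbouxContraction [Fintype κ] : ExteriorAlgebra R M →ₗ[R] ExteriorAlgebra R M :=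
  ∑ i, (contractLeft (b.coord (i, 1))).comp (contractLeft (b.coord (i, 0)))

theorem darbouxContraction_apply [Fintype κ] (x : ExteriorAlgebra R M) :
    darbouxContraction b x =
      ∑ i, contractLeft (b.coord (i, 1)) (contractLeft (b.coord (i, 0)) x) := by
  simp [darbouxContraction]

theorem contractLeft_coord_pair_ι_mul_ι_mul [DecidableEq κ] (i j : κ) (x : ExteriorAlgebra R M) :
    contractLeft (b.coord (i, 1)) (contractLeft (b.coord (i, 0))
      (ι R (b (j, 0)) * ι R (b (j, 1)) * x)) =
      (if j = i then x - ∑ a, ι R (b (j, a)) * contractLeft (b.coord (j, a)) x else 0)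
      + ι R (b (j, 0)) * ι R (b (j, 1)) *
          contractLeft (b.coord (i, 1)) (contractLeft (b.coord (i, 0)) x) := by
  rw [contractLeft_contractLeft_ι_mul_ι_mul]
  split_ifs with h
  · subst h
    simp [Module.Basis.coord_apply, Fin.sum_univ_two]
    module
  · simp [Module.Basis.coord_apply, h]

theorem darbouxContraction_darbouxForm_mul [Fintype κ] (x : ExteriorAlgebra R M) :
    darbouxContraction b (darbouxForm b * x) =
      (Fintype.card κ : R) • x - ∑ m, ι R (b m) * contractLeft (b.coord m) x
      + darbouxForm b * darbouxContraction b x := by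
  classical
  simp only [darbouxContraction_apply, darbouxForm, Finset.sum_mul, map_sum,
    contractLeft_coord_pair_ι_mul_ι_mul, Finset.sum_add_distrib, Finset.sum_ite_eq,
    Finset.mem_univ, if_true, Finset.mul_sum]
  rw [Finset.sum_sub_distrib, Finset.sum_const, Finset.card_univ, Fintype.sum_prod_type,
    Nat.cast_smul_eq_nsmul]
  exact congrArg _ Finset.sum_comm

theorem darbouxContraction_darbouxForm_mul_sub [Fintype κ] {k : ℕ} {x : ExteriorAlgebra R M}
    (hx : x ∈ ⋀[R]^k M) :
    darbouxContraction b (darbouxForm b * x) - darbouxForm b * darbouxContraction b x =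
      ((Fintype.card κ : R) - k) • x := by
  rw [darbouxContraction_darbouxForm_mul, sum_ι_mul_contractLeft_coord b hx]
  module

theorem darbouxForm_mem_exteriorPower_two [Fintype κ] : darbouxForm b ∈ ⋀[R]^2 M :=
  Submodule.sum_mem _ fun _ _ =>
    SetLike.mul_mem_graded (ι_mem_exteriorPower_one _) (ι_mem_exteriorPower_one _)

theorem darbouxContraction_mem_exteriorPower [Fintype κ] {k : ℕ} {x : ExteriorAlgebra R M}
    (hx : x ∈ ⋀[R]^(k + 2) M) : darbouxContraction b x ∈ ⋀[R]^k M := by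
  rw [darbouxContraction_apply]
  exact Submodule.sum_mem _ fun _ _ =>
    contractLeft_mem_exteriorPower _ (contractLeft_mem_exteriorPower _ hx)

theorem darbouxContraction_eq_zero_of_lt_two [Fintype κ] {k : ℕ} (hk : k < 2)
    {x : ExteriorAlgebra R M} (hx : x ∈ ⋀[R]^k M) : darbouxContraction b x = 0 := by
  rw [darbouxContraction_apply]
  refine Finset.sum_eq_zero fun i _ => ?_
  obtain rfl | rfl : k = 0 ∨ k = 1 := by omega
  · rw [contractLeft_eq_zero_of_mem_exteriorPower_zero _ hx, map_zero]
  · exact contractLeft_eq_zero_of_mem_exteriorPower_zero _ (contractLeft_mem_exteriorPower _ hx)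

end

theorem linearMap_ext_exteriorPower {A B : ExteriorAlgebra R M →ₗ[R] ExteriorAlgebra R M}
    (h : ∀ k, ∀ x ∈ ⋀[R]^k M, A x = B x) : A = B :=
  DirectSum.decompose_lhom_ext (fun k => ⋀[R]^k M) fun k => LinearMap.ext fun x => h k x x.2

section Grading

variable {c : R} {H T : ExteriorAlgebra R M →ₗ[R] ExteriorAlgebra R M}

theorem comp_sub_comp_eq_neg_two_smul_of_degree_add_two
    (hH : ∀ k, ∀ x ∈ ⋀[R]^k M, H x = (c - k) • x)
    (hT : ∀ k, ∀ x ∈ ⋀[R]^k M, T x ∈ ⋀[R]^(k + 2) M) :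
    H ∘ₗ T - T ∘ₗ H = (-2 : R) • T :=
  linearMap_ext_exteriorPower fun k x hx => by
    simp only [LinearMap.sub_apply, LinearMap.comp_apply, LinearMap.smul_apply,
      hH _ _ (hT k x hx), hH k x hx, map_smul]
    push_cast
    module

theorem comp_sub_comp_eq_two_smul_of_degree_sub_two
    (hH : ∀ k, ∀ x ∈ ⋀[R]^k M, H x = (c - k) • x)
    (hT : ∀ k, ∀ x ∈ ⋀[R]^(k + 2) M, T x ∈ ⋀[R]^k M)
    (hT_low : ∀ k < 2, ∀ x ∈ ⋀[R]^k M, T x = 0) :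
    H ∘ₗ T - T ∘ₗ H = (2 : R) • T :=
  linearMap_ext_exteriorPower fun k x hx => by
    simp only [LinearMap.sub_apply, LinearMap.comp_apply, LinearMap.smul_apply]
    rcases Nat.lt_or_ge k 2 with hk | hk
    · rw [hH k x hx, map_smul, hT_low k hk x hx, smul_zero, map_zero, sub_zero, smul_zero]
    · obtain ⟨j, rfl⟩ := Nat.exists_eq_add_of_le' hk
      rw [hH _ _ (hT j x hx), hH _ x hx, map_smul]
      push_cast
      module

end Grading

end ExteriorAlgebra

theorem sl2_triple_on_exterior_algebra
    (n : ℕ) (V : Type) [AddCommGroup V] [Module ℝ V]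
    -- a Darboux basis of one-forms (equivalently, a symplectic structure ω on V)
    (f : Module.Basis (Fin (2 * n)) ℝ (Module.Dual ℝ V))
    (ω : ExteriorAlgebra ℝ (Module.Dual ℝ V))
    (hω : ω = ∑ i : Fin n,
      ExteriorAlgebra.ι ℝ (f ⟨2 * i.1, by have := i.2; omega⟩) *
      ExteriorAlgebra.ι ℝ (f ⟨2 * i.1 + 1, by have := i.2; omega⟩))
    (Lop Λop Hop : ExteriorAlgebra ℝ (Module.Dual ℝ V) →ₗ[ℝ]
      ExteriorAlgebra ℝ (Module.Dual ℝ V))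
    -- L is wedging with ω
    (hL : ∀ η, Lop η = ω * η)
    -- Λ is the contraction operator dual to L
    (hΛ : Λop = ∑ i : Fin n,
      (CliffordAlgebra.contractLeft (f.coord ⟨2 * i.1 + 1, by have := i.2; omega⟩)).comp
        (CliffordAlgebra.contractLeft (f.coord ⟨2 * i.1, by have := i.2; omega⟩)))
    -- H is multiplication by (n - k) on k-forms
    (hH : ∀ (k : ℕ) (η : ExteriorAlgebra ℝ (Module.Dual ℝ V)),
      η ∈ ⋀[ℝ]^k (Module.Dual ℝ V) → Hop η = ((n : ℝ) - (k : ℝ)) • η) :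
    Λop ∘ₗ Lop - Lop ∘ₗ Λop = Hop ∧
    Hop ∘ₗ Λop - Λop ∘ₗ Hop = (2 : ℝ) • Λop ∧
    Hop ∘ₗ Lop - Lop ∘ₗ Hop = (-2 : ℝ) • Lop := by
  -- `b (i, a) = f ⟨2 * i + a, _⟩`
  set b := f.reindex (finProdFinEquiv.trans (finCongr (mul_comm n 2))).symm
  have hL' : ∀ η, Lop η = darbouxForm b * η := by
    simpa [hω, darbouxForm, b, finProdFinEquiv, add_comm] using hL
  have hΛ' : Λop = darbouxContraction b := by
    simp [hΛ, darbouxContraction, b, finProdFinEquiv, Module.Basis.coord_reindex, add_comm]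
  subst hΛ'
  refine ⟨linearMap_ext_exteriorPower fun k η hη => ?_, ?_, ?_⟩
  · simp only [LinearMap.sub_apply, LinearMap.comp_apply, hL', hH k η hη,
      darbouxContraction_darbouxForm_mul_sub b hη, Fintype.card_fin]
  · exact comp_sub_comp_eq_two_smul_of_degree_sub_two hH
      (fun _ _ hx => darbouxContraction_mem_exteriorPower b hx)
      (fun _ hk _ hx => darbouxContraction_eq_zero_of_lt_two b hk hx)
  · refine comp_sub_comp_eq_neg_two_smul_of_degree_add_two hH fun k η hη => ?_
    rw [hL', add_comm]
    exact SetLike.mul_mem_graded (darbouxForm_mem_exteriorPower_two b) hη
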